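/- Let G = {α_t : t ∈ ℕ} be a countable subgroup of 𝕋 and (M_t)_{t∈ℕ} a sequence of positive integers. Then there exists a sequence (V_t)_{t∈ℕ} of open subsets of 𝕋 such that (i) V_t ⊇ ⟨α₁,…,α_t⟩_{M_t} for every t, and (ii) the limes inferior ⋃_{k∈ℕ} ⋂_{t≥k} V_t equals G. -/

import Mathlib

/-! The `t`-th set `⟨α₁,…,α_t⟩_{M_t}` is finite, contained in `G`, and contains every `α_s` with
`s < t`; so its liminf is exactly `G`. It then suffices to fatten each finite set `F_t` into a union
of balls of radius `ε_t` without enlarging the liminf. Choose `ε_t` decreasing to `0` and at most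
half the minimal distance between distinct points of `F_t ∪ F_{t+1}`. If `y` lies in all the
fattenings from time `k` on, a point of `F_t` that is `ε_t`-close to `y` is also the unique point of
`F_{t+1}` that is `ε_{t+1}`-close to `y`; hence one point `x` serves for all `t ≥ k`, and `ε_t → 0`
forces `y = x ∈ liminf F_t`. -/

/-- `⟨α₁,…,α_t⟩_M`: integer combinations of the first `t` terms of `α` with
coefficients bounded by `M`. -/
def spanM (α : ℕ → AddCircle (1 : ℝ)) (t M : ℕ) : Set (AddCircle (1 : ℝ)) :=
  {x | ∃ k : ℕ → ℤ, (∀ j, |k j| ≤ (M : ℤ)) ∧ x = ∑ j ∈ Finset.range t, k j • α j}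

open Filter Topology
open scoped ENNReal

theorem exists_antitone_lt_le {α : Type*} [LinearOrder α] (a : α) (δ : ℕ → α)
    (hδ : ∀ t, a < δ t) : ∃ ε : ℕ → α, Antitone ε ∧ (∀ t, a < ε t) ∧ ∀ t, ε t ≤ δ t := by
  refine ⟨fun t => (Finset.range (t + 1)).inf' Finset.nonempty_range_add_one δ, ?_, ?_, ?_⟩
  · intro s t hst
    exact Finset.inf'_mono _ (Finset.range_subset_range.2 (by omega)) _
  · exact fun t => (Finset.lt_inf'_iff _).2 fun s _ => hδ s
  · exact fun t => Finset.inf'_le _ (Finset.self_mem_range_succ t)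

section EMetricSpace

variable {X : Type*} [EMetricSpace X]

theorem liminf_biUnion_eball_subset (F : ℕ → Set X) (ε : ℕ → ℝ≥0∞) (hε : Antitone ε)
    (hε₀ : Tendsto ε atTop (𝓝 0))
    (hsep : ∀ t, ∀ x ∈ F t, ∀ x' ∈ F (t + 1), x ≠ x' → 2 * ε t ≤ edist x x') :
    ⋃ k, ⋂ t, ⋂ _ : k ≤ t, (⋃ x ∈ F t, Metric.eball x (ε t)) ⊆ ⋃ k, ⋂ t, ⋂ _ : k ≤ t, F t := by
  simp only [Set.subset_def, Set.mem_iUnion, Set.mem_iInter, Metric.mem_eball, exists_prop]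
  rintro y ⟨k, hy⟩
  obtain ⟨x, hxk, hyx⟩ := hy k le_rfl
  have hstay : ∀ t, k ≤ t → x ∈ F t ∧ edist y x < ε t := by
    intro t hkt
    induction t, hkt using Nat.le_induction with
    | base => exact ⟨hxk, hyx⟩
    | succ t hkt ih =>
      obtain ⟨x', hx', hyx'⟩ := hy (t + 1) (by omega)
      obtain rfl : x = x' := by
        by_contra hne
        have hclose : edist x x' < 2 * ε t :=
          calc edist x x' ≤ edist y x + edist y x' := edist_triangle_left x x' y
            _ < ε t + ε t := ENNReal.add_lt_add ih.2 (hyx'.trans_le (hε t.le_succ))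
            _ = 2 * ε t := (two_mul _).symm
        exact (hsep t x ih.1 x' hx' hne).not_gt hclose
      exact ⟨hx', hyx'⟩
  have hyx₀ : edist y x ≤ 0 :=
    ge_of_tendsto hε₀ (eventually_atTop.2 ⟨k, fun t ht => (hstay t ht).2.le⟩)
  obtain rfl : y = x := edist_le_zero.1 hyx₀
  exact ⟨k, fun t ht => (hstay t ht).1⟩

theorem exists_isOpen_superset_liminf_eq (F : ℕ → Set X) (hF : ∀ t, (F t).Finite) :
    ∃ V : ℕ → Set X, (∀ t, IsOpen (V t)) ∧ (∀ t, F t ⊆ V t) ∧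
      ⋃ k, ⋂ t, ⋂ _ : k ≤ t, V t = ⋃ k, ⋂ t, ⋂ _ : k ≤ t, F t := by
  choose δ hδ hsep using fun t => ((hF t).union (hF (t + 1))).relatively_discrete
  obtain ⟨ε, hanti, hpos, hle⟩ := exists_antitone_lt_le 0 (fun t => min (δ t / 2) (t : ℝ≥0∞)⁻¹)
    fun t => lt_min (ENNReal.half_pos (hδ t).ne') (ENNReal.inv_pos.2 (ENNReal.natCast_ne_top t))
  have hsub : ∀ t, F t ⊆ ⋃ x ∈ F t, Metric.eball x (ε t) :=
    fun t x hx => Set.mem_biUnion hx (Metric.mem_eball_self (hpos t))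
  refine ⟨fun t => ⋃ x ∈ F t, Metric.eball x (ε t),
    fun t => isOpen_biUnion fun _ _ => Metric.isOpen_eball, hsub, ?_⟩
  refine (liminf_biUnion_eball_subset F ε hanti ?_ ?_).antisymm
    (Set.iUnion_mono fun k => Set.iInter₂_mono fun t _ => hsub t)
  · exact tendsto_of_tendsto_of_tendsto_of_le_of_le tendsto_const_nhds
      ENNReal.tendsto_inv_nat_nhds_zero (fun _ => zero_le) fun t => (hle t).trans (min_le_right _ _)
  · intro t x hx x' hx' hne
    calc 2 * ε t ≤ 2 * (δ t / 2) := by gcongr; exact (hle t).trans (min_le_left _ _)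
      _ = δ t := ENNReal.mul_div_cancel two_ne_zero ENNReal.ofNat_ne_top
      _ ≤ edist x x' := hsep t x (Or.inl hx) x' (Or.inr hx') hne

end EMetricSpace

section spanM

variable (α : ℕ → AddCircle (1 : ℝ))

theorem spanM_finite (t M : ℕ) : (spanM α t M).Finite := by
  refine (Set.finite_range fun c : Fin t → Finset.Icc (-(M : ℤ)) M =>
    ∑ j, (c j : ℤ) • α j).subset ?_
  rintro _ ⟨k, hk, rfl⟩
  exact ⟨fun j => ⟨k j, Finset.mem_Icc.2 (abs_le.1 (hk j))⟩,
    (Finset.sum_range fun j => k j • α j).symm⟩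

theorem spanM_subset {G : AddSubgroup (AddCircle (1 : ℝ))} (hα : ∀ j, α j ∈ G) (t M : ℕ) :
    spanM α t M ⊆ G := by
  rintro _ ⟨k, -, rfl⟩
  exact G.sum_mem fun j _ => G.zsmul_mem (hα j) _

theorem mem_spanM {s t M : ℕ} (hst : s < t) (hM : 0 < M) : α s ∈ spanM α t M := by
  refine ⟨Pi.single s 1, fun j => ?_, ?_⟩
  · rcases eq_or_ne j s with rfl | hj <;> simp [*]; omega
  · rw [Finset.sum_eq_single_of_mem s (Finset.mem_range.2 hst) fun j _ hj => by simp [hj]]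
    simp

theorem liminf_spanM_eq (G : AddSubgroup (AddCircle (1 : ℝ)))
    (hα : Set.range α = (G : Set (AddCircle (1 : ℝ)))) (M : ℕ → ℕ) (hM : ∀ t, 0 < M t) :
    ⋃ k, ⋂ t, ⋂ _ : k ≤ t, spanM α t (M t) = (G : Set (AddCircle (1 : ℝ))) := by
  refine subset_antisymm (Set.iUnion_subset fun k => (Set.iInter₂_subset k le_rfl).trans
    (spanM_subset α (fun j => hα.subset (Set.mem_range_self j)) k (M k))) ?_
  rw [← hα]
  rintro _ ⟨s, rfl⟩
  exact Set.mem_iUnion.2 ⟨s + 1, Set.mem_iInter₂.2 fun t ht => mem_spanM α ht (hM t)⟩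

end spanM

/-- For a countable subgroup `G = {α_t : t ∈ ℕ}` of `𝕋` and positive integers `(M_t)`,
there are open sets `V_t ⊇ ⟨α₁,…,α_t⟩_{M_t}` with `liminf V_t = G`. -/
theorem stmt_10 (G : AddSubgroup (AddCircle (1 : ℝ))) (α : ℕ → AddCircle (1 : ℝ))
    (hα : Set.range α = (G : Set (AddCircle (1 : ℝ))))
    (M : ℕ → ℕ) (hM : ∀ t, 0 < M t) :
    ∃ V : ℕ → Set (AddCircle (1 : ℝ)),
      (∀ t, IsOpen (V t)) ∧ (∀ t, spanM α t (M t) ⊆ V t) ∧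
        (⋃ k : ℕ, ⋂ t : ℕ, ⋂ _ : k ≤ t, V t) = (G : Set (AddCircle (1 : ℝ))) := by
  obtain ⟨V, hopen, hsub, hV⟩ :=
    exists_isOpen_superset_liminf_eq (fun t => spanM α t (M t)) fun t => spanM_finite α t (M t)
  exact ⟨V, hopen, hsub, hV.trans (liminf_spanM_eq α G hα M hM)⟩
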